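/- arXiv:2305.13109 — 4 statements merged into one kernel-verified Lean document; each statement's English description precedes it below -/
import Mathlib

section
/- Let H be a finite-dimensional vector space over ℚ equipped with a symplectic form ω (a nondegenerate alternating bilinear form). Let G be a group acting linearly on H so that the action preserves ω (i.e., ω(g·x, g·y) = ω(x,y) for all g ∈ G and x,y ∈ H), and assume that H is a semisimple G-representation (H decomposes as a direct sum of irreducible subrepresentations). Then the subspace H^G of G-invariant vectors is a symplectic subspace of H, i.e., the restriction of ω to H^G is nondegenerate. -/
/-!
For an invariant vector `x`, the functional `ω x` is `G`-invariant. On an irreducible summand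
`W` its kernel meets `W` in a subrepresentation, so either `ω x` kills `W`, or the kernel meets
`W` in `0`; in the latter case every `ρ g y - y` with `y ∈ W` lies in that intersection, so `W`
consists of invariants, which `ω x` kills by assumption. Summing over the decomposition,
`ω x = 0`, and nondegeneracy gives `x = 0`.
-/

namespace Representation

variable {k G V N : Type*} [CommRing k] [Group G] [AddCommGroup V] [Module k V]
  [AddCommGroup N] [Module k N] (ρ : Representation k G V)

lemma le_ker_of_irreducible_of_invariants_le_ker {f : V →ₗ[k] N}
    (hf : ∀ (g : G) (x : V), f (ρ g x) = f x) {W : Submodule k V}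
    (hstable : ∀ (g : G) (x : V), x ∈ W → ρ g x ∈ W)
    (hirr : ∀ U : Submodule k V, U ≤ W →
      (∀ (g : G) (x : V), x ∈ U → ρ g x ∈ U) → U = ⊥ ∨ U = W)
    (hinv : W ⊓ ρ.invariants ≤ LinearMap.ker f) :
    W ≤ LinearMap.ker f := by
  have hsub : ∀ (g : G) (y : V), y ∈ W → ρ g y - y ∈ W ⊓ LinearMap.ker f := fun g y hy =>
    ⟨sub_mem (hstable g y hy) hy, by simp [hf]⟩
  rcases hirr (W ⊓ LinearMap.ker f) inf_le_left
      (fun g x hx => ⟨hstable g x hx.1, by simpa [hf] using hx.2⟩) with hbot | htop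
  · intro y hy
    refine hinv ⟨hy, fun g => sub_eq_zero.mp ?_⟩
    simpa [hbot] using hsub g y hy
  · exact inf_eq_left.mp htop

end Representation

theorem invariants_symplectic_general
    {H : Type*} [AddCommGroup H] [Module ℚ H]
    (ω : H →ₗ[ℚ] H →ₗ[ℚ] ℚ)
    (hnd : ∀ x : H, (∀ y : H, ω x y = 0) → x = 0)
    {G : Type*} [Group G] (ρ : Representation ℚ G H)
    (hpres : ∀ (g : G) (x y : H), ω (ρ g x) (ρ g y) = ω x y)
    {ι : Type*} [DecidableEq ι] (W : ι → Submodule ℚ H)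
    (hstable : ∀ (i : ι) (g : G) (x : H), x ∈ W i → ρ g x ∈ W i)
    (hirr : ∀ (i : ι) (U : Submodule ℚ H), U ≤ W i →
      (∀ (g : G) (x : H), x ∈ U → ρ g x ∈ U) → U = ⊥ ∨ U = W i)
    (hsum : DirectSum.IsInternal W) :
    ∀ x : H, (∀ g : G, ρ g x = x) →
      (∀ y : H, (∀ g : G, ρ g y = y) → ω x y = 0) → x = 0 := by
  intro x hx hx0
  have hωx : ∀ (g : G) (y : H), ω x (ρ g y) = ω x y := fun g y => by
    simpa [hx g] using hpres g x y
  have hker : ⨆ i, W i ≤ LinearMap.ker (ω x) := iSup_le fun i =>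
    Representation.le_ker_of_irreducible_of_invariants_le_ker ρ hωx (hstable i) (hirr i)
      fun y hy => hx0 y hy.2
  exact hnd x fun y => hker (hsum.submodule_iSup_eq_top ▸ Submodule.mem_top)

/-- **Symplectic criterion.**  Let `H` be a finite-dimensional `ℚ`-vector space with a
symplectic form `ω` (nondegenerate alternating bilinear form).  Let a group `G` act on `H`
via a representation `ρ` preserving `ω`, and assume `H` is a semisimple `G`-representation,
i.e. `H` is the internal direct sum of a family of irreducible subrepresentations.  Then the
restriction of `ω` to the invariants `H^G` is nondegenerate. -/
theorem invariants_symplectic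
    {H : Type*} [AddCommGroup H] [Module ℚ H] [FiniteDimensional ℚ H]
    (ω : H →ₗ[ℚ] H →ₗ[ℚ] ℚ)
    (halt : ∀ x : H, ω x x = 0)
    (hnd : ∀ x : H, (∀ y : H, ω x y = 0) → x = 0)
    {G : Type*} [Group G] (ρ : Representation ℚ G H)
    (hpres : ∀ (g : G) (x y : H), ω (ρ g x) (ρ g y) = ω x y)
    {ι : Type*} [DecidableEq ι] (W : ι → Submodule ℚ H)
    (hstable : ∀ (i : ι) (g : G) (x : H), x ∈ W i → ρ g x ∈ W i)
    (hne : ∀ i : ι, W i ≠ ⊥)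
    (hirr : ∀ (i : ι) (U : Submodule ℚ H), U ≤ W i →
      (∀ (g : G) (x : H), x ∈ U → ρ g x ∈ U) → U = ⊥ ∨ U = W i)
    (hsum : DirectSum.IsInternal W) :
    ∀ x : H, (∀ g : G, ρ g x = x) →
      (∀ y : H, (∀ g : G, ρ g y = y) → ω x y = 0) → x = 0 :=
  invariants_symplectic_general ω hnd ρ hpres W hstable hirr hsum
end

section
/- Let H be a vector space over ℚ equipped with an alternating bilinear form ω. Let c_1, …, c_k ∈ H, let e_1, …, e_k be positive rational numbers, and define the linear map τ : H → H by τ(h) = h + Σ_{j=1}^k e_j · ω(h, c_j) · c_j. Then for every h₀ ∈ H, one has τ(h₀) = h₀ if and only if ω(h₀, c_j) = 0 for all 1 ≤ j ≤ k. -/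
/-- Let `H` be a `ℚ`-vector space with an alternating bilinear form `ω`, let
`c 1, …, c k ∈ H` and positive rationals `e 1, …, e k`, and let
`τ h = h + ∑ j, e j * ω h (c j) • c j`.  Then `τ h₀ = h₀` iff `ω h₀ (c j) = 0` for all `j`. -/
theorem twist_fixed_iff_orthogonal
    {H : Type*} [AddCommGroup H] [Module ℚ H]
    (ω : H →ₗ[ℚ] H →ₗ[ℚ] ℚ)
    (halt : ∀ x : H, ω x x = 0)
    (k : ℕ) (c : Fin k → H) (e : Fin k → ℚ) (he : ∀ j, 0 < e j)
    (τ : H →ₗ[ℚ] H)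
    (hτ : ∀ h : H, τ h = h + ∑ j, (e j * ω h (c j)) • c j)
    (h₀ : H) :
    τ h₀ = h₀ ↔ ∀ j, ω h₀ (c j) = 0 := by
  rw [hτ h₀]
  constructor
  · intro hfix
    have hS : ∑ j, (e j * ω h₀ (c j)) • c j = 0 := by
      have := hfix
      rwa [add_eq_left] at this
    have hsum : ∑ j, e j * (ω h₀ (c j)) ^ 2 = 0 := by
      have := congrArg (fun x => ω h₀ x) hS
      simpa [map_sum, mul_comm, mul_assoc, mul_left_comm, sq] using this
    intro j
    have hterm : ∀ i ∈ Finset.univ, (0:ℚ) ≤ e i * (ω h₀ (c i)) ^ 2 := fun i _ =>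
      mul_nonneg (he i).le (sq_nonneg _)
    have := (Finset.sum_eq_zero_iff_of_nonneg hterm).mp hsum j (Finset.mem_univ j)
    rcases mul_eq_zero.mp this with h | h
    · exact absurd h (he j).ne'
    · exact pow_eq_zero_iff (n := 2) (by norm_num) |>.mp h
  · intro hz
    simp [hz]
end

section
/- Let H be a vector space over ℚ equipped with an alternating bilinear form ω. Let I be an index set, and for each α ∈ I let c_{α,1}, …, c_{α,k_α} ∈ H be vectors and e_{α,1}, …, e_{α,k_α} positive rational numbers; define the linear automorphism τ_α : H → H by τ_α(h) = h + Σ_{j=1}^{k_α} e_{α,j} · ω(h, c_{α,j}) · c_{α,j}, and assume ω(c_{α,i}, c_{α,j}) = 0 for all α and all i, j (so each τ_α is invertible). Let D be the subgroup of GL(H) generated by the τ_α for α ∈ I. Then the fixed space H^D = {h ∈ H : d(h) = h for all d ∈ D} equals the ω-orthogonal complement of the span of all the vectors c_{α,j}, i.e., H^D = {h ∈ H : ω(h, c_{α,j}) = 0 for all α ∈ I and 1 ≤ j ≤ k_α}. -/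
/-- Let `H` be a `ℚ`-vector space with an alternating bilinear form `ω`.  For each `α` in an
index set `I`, let `c α 1, …, c α (k α) ∈ H` be pairwise `ω`-orthogonal vectors,
`e α j > 0` rationals, and `τ α` the linear automorphism
`h ↦ h + ∑ j, e α j * ω h (c α j) • c α j`.  Let `D` be the subgroup of `GL(H)` generated by
the `τ α`.  Then the fixed space `H^D` equals the `ω`-orthogonal complement of the set of all
the vectors `c α j`. -/
theorem fixed_space_of_twist_group_eq_orthogonal_complement
    {H : Type*} [AddCommGroup H] [Module ℚ H]
    (ω : H →ₗ[ℚ] H →ₗ[ℚ] ℚ)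
    (halt : ∀ x : H, ω x x = 0)
    {I : Type*} (k : I → ℕ) (c : ∀ α : I, Fin (k α) → H) (e : ∀ α : I, Fin (k α) → ℚ)
    (he : ∀ (α : I) (j : Fin (k α)), 0 < e α j)
    (horth : ∀ (α : I) (i j : Fin (k α)), ω (c α i) (c α j) = 0)
    (τ : I → (H ≃ₗ[ℚ] H))
    (hτ : ∀ (α : I) (h : H), τ α h = h + ∑ j, (e α j * ω h (c α j)) • c α j) :
    {h : H | ∀ d ∈ Subgroup.closure (Set.range τ), d h = h} =
      {h : H | ∀ (α : I) (j : Fin (k α)), ω h (c α j) = 0} := by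
  ext h
  simp only [Set.mem_setOf_eq]
  constructor
  · intro hfix α j
    have hτα : τ α h = h := hfix (τ α) (Subgroup.subset_closure ⟨α, rfl⟩)
    rw [hτ] at hτα
    have hsum : ∑ i, (e α i * ω h (c α i)) • c α i = 0 :=
      add_eq_left.mp hτα
    have h2 : ∑ i, e α i * (ω h (c α i)) ^ 2 = 0 := by
      have := congrArg (ω h) hsum
      simp only [map_sum, map_smul, smul_eq_mul, map_zero] at this
      rw [← this]
      apply Finset.sum_congr rfl
      intro i _
      ring
    have hz : e α j * (ω h (c α j)) ^ 2 = 0 := by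
      have hnn : ∀ i ∈ Finset.univ, 0 ≤ e α i * (ω h (c α i)) ^ 2 := fun i _ =>
        mul_nonneg (he α i).le (sq_nonneg _)
      exact (Finset.sum_eq_zero_iff_of_nonneg hnn).mp h2 j (Finset.mem_univ j)
    have := mul_eq_zero.mp hz
    rcases this with h1 | h1
    · exact absurd h1 (he α j).ne'
    · exact pow_eq_zero_iff (two_ne_zero) |>.mp h1
  · intro hperp d hd
    induction hd using Subgroup.closure_induction with
    | mem g hg =>
      obtain ⟨α, rfl⟩ := hg
      rw [hτ]
      simp [hperp]
    | one => rfl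
    | mul a b _ _ ha hb =>
      have : (a * b) h = a (b h) := rfl
      rw [this, hb, ha]
    | inv a _ ha =>
      have : a⁻¹ (a h) = h := by
        have : (a⁻¹ * a) h = h := by rw [inv_mul_cancel]; rfl
        exact this
      conv_lhs => rw [← ha]
      exact this
end

section
/- Let g ≥ 2 and ℓ ≥ 3 be integers. Let π be the genus-g surface group, i.e., the group with presentation ⟨a_1, b_1, …, a_g, b_g | [a_1,b_1][a_2,b_2]⋯[a_g,b_g] = 1⟩. Let K be the kernel of the natural homomorphism from π to its mod-ℓ abelianization (the composition of the abelianization map π → π^{ab} ≅ ℤ^{2g} with reduction modulo ℓ, landing in (ℤ/ℓ)^{2g}). Let P be the subgroup of π generated by {x^ℓ : x ∈ π}. Then P ⊆ K, and the image of P under the abelianization map K → K^{ab} = K/[K,K] is a proper subgroup of K^{ab}. -/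
open scoped commutatorElement

/-- The single surface relation `[a₁,b₁][a₂,b₂]⋯[a_g,b_g]` in the free group on the `2g`
generators `a_i = (i, true)` and `b_i = (i, false)`. -/
abbrev surfaceRels (g : ℕ) : Set (FreeGroup (Fin g × Bool)) :=
  {(List.ofFn fun i : Fin g =>
      ⁅FreeGroup.of ((i, true) : Fin g × Bool), FreeGroup.of ((i, false) : Fin g × Bool)⁆).prod}

/-- The genus-`g` surface group `⟨a₁,b₁,…,a_g,b_g ∣ [a₁,b₁]⋯[a_g,b_g]⟩`. -/
abbrev SurfaceGroup (g : ℕ) : Type := PresentedGroup (surfaceRels g)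

/-- The generator `a_i` of the surface group. -/
abbrev SurfaceGroup.a {g : ℕ} (i : Fin g) : SurfaceGroup g := PresentedGroup.of (i, true)

/-- The generator `b_i` of the surface group. -/
abbrev SurfaceGroup.b {g : ℕ} (i : Fin g) : SurfaceGroup g := PresentedGroup.of (i, false)

/-- The subgroup of `ℓ`-th powers of the abelianization of the surface group. -/
abbrev abPowers (g l : ℕ) : Subgroup (Abelianization (SurfaceGroup g)) :=
  Subgroup.closure {x : Abelianization (SurfaceGroup g) |
    ∃ a : Abelianization (SurfaceGroup g), x = a ^ l}

/-- The natural homomorphism from the genus-`g` surface group to its mod-`ℓ`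
abelianization, i.e. the composition of the abelianization map with the reduction of the
abelianization modulo `ℓ`-th powers. -/
abbrev modLAb (g l : ℕ) :
    SurfaceGroup g →* Abelianization (SurfaceGroup g) ⧸ abPowers g l :=
  (QuotientGroup.mk' (abPowers g l)).comp Abelianization.of

/-!
Send `a₁ ↦ x`, `b₁ ↦ y`, `a₂ ↦ y`, `b₂ ↦ x` and all other generators to `1` in the Heisenberg
group `H` over `ℤ/ℓ`, where `z = [x, y]` generates the centre `≅ ℤ/ℓ`. The kernel `K` of the
mod-`ℓ` abelianization lands in the centre, which gives a homomorphism `ψ : K → ℤ/ℓ` factoring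
through `K^{ab}`. An `ℓ`-th power in `H` has central coordinate `ℓc + ℓ(ℓ-1)/2 · ab`, which is
killed by `2`, so `ψ(P)` consists of `2`-torsion, whereas `ψ([a₁, b₁]) = 1` is not `2`-torsion
once `ℓ ≥ 3`.
-/

@[ext]
structure Heisenberg (R : Type) where
  a : R
  b : R
  c : R

namespace Heisenberg

variable {R : Type} [CommRing R]

-- The unitriangular matrices `[[1, a, c], [0, 1, b], [0, 0, 1]]` under multiplication.
instance : Mul (Heisenberg R) := ⟨fun x y => ⟨x.a + y.a, x.b + y.b, x.c + y.c + x.a * y.b⟩⟩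
instance : One (Heisenberg R) := ⟨⟨0, 0, 0⟩⟩
instance : Inv (Heisenberg R) := ⟨fun x => ⟨-x.a, -x.b, -x.c + x.a * x.b⟩⟩

@[simp] lemma mul_a (x y : Heisenberg R) : (x * y).a = x.a + y.a := rfl
@[simp] lemma mul_b (x y : Heisenberg R) : (x * y).b = x.b + y.b := rfl
@[simp] lemma mul_c (x y : Heisenberg R) : (x * y).c = x.c + y.c + x.a * y.b := rfl
@[simp] lemma one_a : (1 : Heisenberg R).a = 0 := rfl
@[simp] lemma one_b : (1 : Heisenberg R).b = 0 := rfl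
@[simp] lemma one_c : (1 : Heisenberg R).c = 0 := rfl
@[simp] lemma inv_a (x : Heisenberg R) : x⁻¹.a = -x.a := rfl
@[simp] lemma inv_b (x : Heisenberg R) : x⁻¹.b = -x.b := rfl
@[simp] lemma inv_c (x : Heisenberg R) : x⁻¹.c = -x.c + x.a * x.b := rfl

instance : Group (Heisenberg R) where
  mul_assoc x y z := by ext <;> simp only [mul_a, mul_b, mul_c] <;> ring
  one_mul x := by ext <;> simp
  mul_one x := by ext <;> simp
  inv_mul_cancel x := by ext <;> simp

@[simp] lemma pow_a (x : Heisenberg R) (n : ℕ) : (x ^ n).a = n * x.a := by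
  induction n with
  | zero => simp
  | succ n ih => rw [pow_succ, mul_a, ih, Nat.cast_succ]; ring

@[simp] lemma pow_b (x : Heisenberg R) (n : ℕ) : (x ^ n).b = n * x.b := by
  induction n with
  | zero => simp
  | succ n ih => rw [pow_succ, mul_b, ih, Nat.cast_succ]; ring

lemma two_mul_pow_c (x : Heisenberg R) (n : ℕ) :
    2 * (x ^ n).c = 2 * n * x.c + n * (n - 1) * (x.a * x.b) := by
  induction n with
  | zero => simp
  | succ n ih =>
    simp only [pow_succ, mul_c, Nat.cast_succ, pow_a]
    linear_combination ih

lemma commutator_a_b :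
    ⁅(⟨1, 0, 0⟩ : Heisenberg R), (⟨0, 1, 0⟩ : Heisenberg R)⁆ = (⟨0, 0, 1⟩ : Heisenberg R) := by
  ext <;> simp [commutatorElement_def]

def abelianize : Heisenberg R →* Multiplicative (R × R) where
  toFun x := Multiplicative.ofAdd (x.a, x.b)
  map_one' := rfl
  map_mul' _ _ := rfl

lemma mem_ker_abelianize {x : Heisenberg R} : x ∈ abelianize.ker ↔ x.a = 0 ∧ x.b = 0 := by
  simp [abelianize, MonoidHom.mem_ker, ← ofAdd_zero, Prod.ext_iff]

def centralCoord : (abelianize (R := R)).ker →* Multiplicative R where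
  toFun x := Multiplicative.ofAdd x.1.c
  map_one' := rfl
  map_mul' x y := by
    simp [(mem_ker_abelianize.mp x.2).1, ofAdd_add]

variable (R) in
def centralTwoTorsion : Subgroup (Heisenberg R) where
  carrier := {x | x.a = 0 ∧ x.b = 0 ∧ 2 * x.c = 0}
  one_mem' := by simp
  mul_mem' := by
    rintro x y ⟨hxa, hxb, hxc⟩ ⟨hya, hyb, hyc⟩
    refine ⟨by simp [hxa, hya], by simp [hxb, hyb], ?_⟩
    simp only [mul_c, hxa, zero_mul, add_zero]
    linear_combination hxc + hyc
  inv_mem' := by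
    rintro x ⟨hxa, hxb, hxc⟩
    refine ⟨by simp [hxa], by simp [hxb], ?_⟩
    simp only [inv_c, hxa, zero_mul, add_zero]
    linear_combination -hxc

lemma pow_card_mem_centralTwoTorsion {n : ℕ} (x : Heisenberg (ZMod n)) :
    x ^ n ∈ centralTwoTorsion (ZMod n) := by
  refine ⟨by simp, by simp, ?_⟩
  rw [two_mul_pow_c]
  simp

end Heisenberg

lemma Abelianization.map_of_ne_top_of_notMem_map {G A : Type*} [Group G] [CommGroup A]
    {H : Subgroup G} (ψ : G →* A) {g : G} (hg : ψ g ∉ H.map ψ) : H.map Abelianization.of ≠ ⊤ := by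
  intro hH
  apply hg
  have hgH : Abelianization.of g ∈ H.map Abelianization.of := hH ▸ Subgroup.mem_top _
  simpa [Subgroup.map_map] using Subgroup.mem_map_of_mem (Abelianization.lift ψ) hgH

section SurfaceGroup

variable {g l : ℕ}

lemma pow_mem_ker_modLAb (u : SurfaceGroup g) : u ^ l ∈ (modLAb g l).ker := by
  rw [MonoidHom.mem_ker, map_pow, modLAb, MonoidHom.comp_apply, ← map_pow,
    QuotientGroup.mk'_apply, QuotientGroup.eq_one_iff]
  exact Subgroup.subset_closure ⟨_, rfl⟩

lemma ker_modLAb_le {A : Type*} [CommGroup A] (θ : SurfaceGroup g →* A)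
    (hA : ∀ x : A, x ^ l = 1) : (modLAb g l).ker ≤ θ.ker := by
  intro k hk
  have hpow : abPowers g l ≤ (Abelianization.lift θ).ker := by
    rw [Subgroup.closure_le]
    rintro _ ⟨x, rfl⟩
    simp [hA]
  rw [MonoidHom.mem_ker, modLAb, MonoidHom.comp_apply, QuotientGroup.mk'_apply,
    QuotientGroup.eq_one_iff] at hk
  simpa using hpow hk

end SurfaceGroup

namespace Heisenberg

variable {R : Type} [CommRing R] (m : ℕ)

def surfaceGen : Fin (m + 2) × Bool → Heisenberg R
  | (i, t) => Fin.cases (cond t ⟨1, 0, 0⟩ ⟨0, 1, 0⟩) (Fin.cases (cond t ⟨0, 1, 0⟩ ⟨1, 0, 0⟩) 1) i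

@[simp] lemma surfaceGen_zero (t : Bool) :
    surfaceGen (R := R) m (0, t) = cond t ⟨1, 0, 0⟩ ⟨0, 1, 0⟩ := rfl

@[simp] lemma surfaceGen_one (t : Bool) :
    surfaceGen (R := R) m (1, t) = cond t ⟨0, 1, 0⟩ ⟨1, 0, 0⟩ := rfl

@[simp] lemma surfaceGen_succ_succ (i : Fin m) (t : Bool) :
    surfaceGen (R := R) m (i.succ.succ, t) = 1 := rfl

lemma surfaceGen_rel :
    ∀ r ∈ surfaceRels (m + 2), FreeGroup.lift (surfaceGen (R := R) m) r = 1 := by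
  rintro _ rfl
  simp only [commutatorElement_def, List.ofFn_succ, Fin.succ_zero_eq_one, List.prod_cons, map_mul,
    FreeGroup.lift_apply_of, surfaceGen_zero, cond_true, cond_false, map_inv, surfaceGen_one,
    map_list_prod, List.map_ofFn, Function.comp_def, surfaceGen_succ_succ, mul_one, inv_one,
    List.ofFn_const, List.prod_replicate, one_pow]
  ext <;> simp

def fromSurface : SurfaceGroup (m + 2) →* Heisenberg R := PresentedGroup.toGroup (surfaceGen_rel m)

variable {m}

lemma fromSurface_commutator :
    fromSurface (R := R) m ⁅SurfaceGroup.a (0 : Fin (m + 2)), SurfaceGroup.b 0⁆ = ⟨0, 0, 1⟩ := by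
  simp only [map_commutatorElement, fromSurface, PresentedGroup.toGroup.of]
  exact commutator_a_b

variable {n : ℕ}

lemma fromSurface_mem_ker_abelianize {k : SurfaceGroup (m + 2)}
    (hk : k ∈ (modLAb (m + 2) n).ker) :
    fromSurface m k ∈ (abelianize (R := ZMod n)).ker :=
  ker_modLAb_le (abelianize.comp (fromSurface m)) (fun x : Multiplicative (ZMod n × ZMod n) => by
    rw [← ofAdd_toAdd x, ← ofAdd_nsmul]
    simp [Prod.ext_iff, nsmul_eq_mul]) hk

lemma closure_pow_le_comap_fromSurface :
    Subgroup.closure {x : SurfaceGroup (m + 2) | ∃ u, x = u ^ n} ≤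
      (centralTwoTorsion (ZMod n)).comap (fromSurface m) := by
  rw [Subgroup.closure_le]
  rintro _ ⟨u, rfl⟩
  simpa using pow_card_mem_centralTwoTorsion (fromSurface m u)

variable (m n) in
def kernelCoord : (modLAb (m + 2) n).ker →* Multiplicative (ZMod n) :=
  centralCoord.comp
    (((fromSurface m).comp (modLAb (m + 2) n).ker.subtype).codRestrict _
      fun k => fromSurface_mem_ker_abelianize k.2)

lemma kernelCoord_apply (k : (modLAb (m + 2) n).ker) :
    kernelCoord m n k = Multiplicative.ofAdd (fromSurface m (k : SurfaceGroup (m + 2))).c := rfl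

end Heisenberg

lemma commutator_a_b_mem_ker_modLAb {g l : ℕ} (i : Fin g) :
    ⁅SurfaceGroup.a i, SurfaceGroup.b i⁆ ∈ (modLAb g l).ker := by
  rw [MonoidHom.mem_ker, map_commutatorElement, commutatorElement_eq_one_iff_mul_comm, mul_comm]

/-- Let `g ≥ 2`, `ℓ ≥ 3`, let `π` be the genus-`g` surface group, `K` the kernel of the
natural map from `π` to its mod-`ℓ` abelianization, and `P` the subgroup of `π` generated
by all `ℓ`-th powers.  Then `P ⊆ K` and the image of `P` in the abelianization `K^{ab}`
of `K` is a proper subgroup. -/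
theorem surfaceGroup_powers_proper_in_kernel_abelianization
    (g l : ℕ) (hg : 2 ≤ g) (hl : 3 ≤ l)
    (K : Subgroup (SurfaceGroup g)) (hK : K = (modLAb g l).ker)
    (P : Subgroup (SurfaceGroup g))
    (hP : P = Subgroup.closure {x : SurfaceGroup g | ∃ u : SurfaceGroup g, x = u ^ l}) :
    P ≤ K ∧
      Subgroup.map (Abelianization.of (G := K)) (P.subgroupOf K) ≠ ⊤ := by
  obtain ⟨m, rfl⟩ : ∃ m, g = m + 2 := ⟨g - 2, by omega⟩
  subst hK hP
  refine ⟨Subgroup.closure_le _ |>.mpr ?_, ?_⟩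
  · rintro _ ⟨u, rfl⟩
    exact pow_mem_ker_modLAb u
  refine Abelianization.map_of_ne_top_of_notMem_map (Heisenberg.kernelCoord m l)
    (g := ⟨_, commutator_a_b_mem_ker_modLAb 0⟩) ?_
  rintro ⟨p, hpP, hp⟩
  have h2c : (2 : ZMod l) * (Heisenberg.fromSurface m (p : SurfaceGroup (m + 2))).c = 0 :=
    (Heisenberg.closure_pow_le_comap_fromSurface (Subgroup.mem_subgroupOf.mp hpP)).2.2
  rw [Heisenberg.kernelCoord_apply, Heisenberg.kernelCoord_apply,
    Heisenberg.fromSurface_commutator, Equiv.apply_eq_iff_eq] at hp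
  have hl2 : l ∣ 2 := (ZMod.natCast_eq_zero_iff 2 l).mp (by simpa [hp] using h2c)
  have := Nat.le_of_dvd two_pos hl2
  omega
end
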